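/- Let α ≥ 2 and β ≥ 2 be integers and let n ≥ 1. A real number λ is an eigenvalue of the adjacency matrix of the alternating tree X^{(α,β)}_{2n} if and only if λ is a root of P^{(α,β)}_m for some m with 2 ≤ m ≤ 2n+1, or λ is a root of Q^{(α,β)}_{2n+1}. -/
import Mathlib


open Polynomial

/-- Vertices of the rooted tree of depth `r` in which each vertex at depth `i < r`
has `b i` children: a vertex is a word assigning to each position `i < m ≤ r`
a letter in `Fin (b i)`; the empty word (`m = 0`) is the root, and the depth of a
vertex is its length `m`. -/
abbrev BVertex (b : ℕ → ℕ) (r : ℕ) := Σ m : Fin (r + 1), (i : Fin (m : ℕ)) → Fin (b i)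

/-- `y` is a child of `x`: the word `y` extends the word `x` by one letter. -/
def BExt {b : ℕ → ℕ} {r : ℕ} (x y : BVertex b r) : Prop :=
  ∃ h : (y.1 : ℕ) = (x.1 : ℕ) + 1,
    ∀ i : Fin (x.1 : ℕ), y.2 ⟨(i : ℕ), by have := i.isLt; omega⟩ = x.2 i

/-- Adjacency in the rooted tree: the parent/child relation. -/
def BAdj {b : ℕ → ℕ} {r : ℕ} (x y : BVertex b r) : Prop := BExt x y ∨ BExt y x

open Classical in
/-- Adjacency matrix of the rooted tree with branching sequence `b` and depth `r`. -/
noncomputable def BAdjMatrix (b : ℕ → ℕ) (r : ℕ) : Matrix (BVertex b r) (BVertex b r) ℝ :=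
  fun x y => if BAdj x y then 1 else 0

/-- `lam` is an eigenvalue of the adjacency matrix of the tree. -/
def IsAdjEigenvalue (b : ℕ → ℕ) (r : ℕ) (lam : ℝ) : Prop :=
  ∃ v : BVertex b r → ℝ, v ≠ 0 ∧ (BAdjMatrix b r).mulVec v = lam • v

/-- Dimension of the `lam`-eigenspace of the adjacency matrix of the tree. -/
noncomputable def adjEigDim (b : ℕ → ℕ) (r : ℕ) (lam : ℝ) : ℕ :=
  Module.finrank ℝ
    (LinearMap.ker ((BAdjMatrix b r).mulVecLin - lam • LinearMap.id))

/-- Branching sequence of the alternating tree `X^{(α,β)}`: vertices at even depth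
have `α` children and vertices at odd depth have `β` children. -/
def altB (a b : ℕ) : ℕ → ℕ := fun i => if Even i then a else b

/-- The polynomials `P^{(α,β)}_n`: `P_0 = 0`, `P_1 = 1`, `P_2 = x`, `P_3 = x² − β`,
and `P_n = (x² − (α+β))·P_{n-2} − αβ·P_{n-4}`. -/
noncomputable def Pab (a b : ℕ) : ℕ → Polynomial ℝ
  | 0 => 0
  | 1 => 1
  | 2 => X
  | 3 => X ^ 2 - C (b : ℝ)
  | n + 4 => (X ^ 2 - C ((a : ℝ) + (b : ℝ))) * Pab a b (n + 2)
      - C ((a : ℝ) * (b : ℝ)) * Pab a b n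

/-- The polynomials `Q^{(α,β)}_n = x·P^{(α,β)}_n − α·P^{(α,β)}_{n-1}`. -/
noncomputable def Qab (a b n : ℕ) : Polynomial ℝ :=
  X * Pab a b n - C (a : ℝ) * Pab a b (n - 1)

section Tree

variable {b : ℕ → ℕ} {r : ℕ}

lemma bvertex_ext {x y : BVertex b r} (h1 : (x.1 : ℕ) = (y.1 : ℕ))
    (h2 : ∀ (i : ℕ) (hx : i < (x.1 : ℕ)) (hy : i < (y.1 : ℕ)), x.2 ⟨i, hx⟩ = y.2 ⟨i, hy⟩) :
    x = y := by
  obtain ⟨⟨m, hm⟩, f⟩ := x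
  obtain ⟨⟨m', hm'⟩, f'⟩ := y
  simp only [Fin.val_mk] at h1
  subst h1
  congr 1
  funext i
  exact h2 i i.2 i.2

/-- The child of `x` with letter `c`. -/
def bchild (x : BVertex b r) (h : (x.1 : ℕ) < r) (c : Fin (b (x.1 : ℕ))) : BVertex b r :=
  ⟨⟨(x.1 : ℕ) + 1, by omega⟩, fun i =>
    if hi : (i : ℕ) < (x.1 : ℕ) then x.2 ⟨i, hi⟩
    else Fin.cast (congrArg b (by have hh : (i : ℕ) < (x.1 : ℕ) + 1 := i.isLt; omega)) c⟩

/-- The parent of `x`. -/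
def bparent (x : BVertex b r) (h : 0 < (x.1 : ℕ)) : BVertex b r :=
  ⟨⟨(x.1 : ℕ) - 1, by have := x.1.isLt; omega⟩, fun i => x.2 ⟨i, by have hh : (i : ℕ) < (x.1 : ℕ) - 1 := i.isLt; omega⟩⟩

@[simp] lemma bchild_depth (x : BVertex b r) (h : (x.1 : ℕ) < r) (c) :
    ((bchild x h c).1 : ℕ) = (x.1 : ℕ) + 1 := rfl

@[simp] lemma bparent_depth (x : BVertex b r) (h : 0 < (x.1 : ℕ)) :
    ((bparent x h).1 : ℕ) = (x.1 : ℕ) - 1 := rfl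

lemma bchild_letter_lt (x : BVertex b r) (h : (x.1 : ℕ) < r) (c) (i : ℕ) (hi : i < (x.1 : ℕ))
    (hi' : i < ((bchild x h c).1 : ℕ)) : (bchild x h c).2 ⟨i, hi'⟩ = x.2 ⟨i, hi⟩ := by
  simp only [bchild]
  rw [dif_pos hi]

lemma bchild_letter_last (x : BVertex b r) (h : (x.1 : ℕ) < r) (c)
    (hi' : (x.1 : ℕ) < ((bchild x h c).1 : ℕ)) :
    ((bchild x h c).2 ⟨(x.1 : ℕ), hi'⟩ : ℕ) = (c : ℕ) := by
  simp only [bchild]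
  rw [dif_neg (by omega)]
  simp

lemma bparent_letter (x : BVertex b r) (h : 0 < (x.1 : ℕ)) (i : ℕ) (hi : i < (x.1 : ℕ))
    (hi' : i < ((bparent x h).1 : ℕ)) : (bparent x h).2 ⟨i, hi'⟩ = x.2 ⟨i, hi⟩ := rfl

lemma bparent_bchild (x : BVertex b r) (h : (x.1 : ℕ) < r) (c) (h2 : 0 < ((bchild x h c).1 : ℕ)) :
    bparent (bchild x h c) h2 = x := by
  apply bvertex_ext
  · simp
  · intro i hx hy
    rw [bparent_letter _ _ i (by simpa using Nat.lt_succ_of_lt hy)]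
    exact bchild_letter_lt x h c i hy _

end Tree
section Tree2

variable {b : ℕ → ℕ} {r : ℕ}

lemma bext_bchild (x : BVertex b r) (h : (x.1 : ℕ) < r) (c) : BExt x (bchild x h c) := by
  refine ⟨rfl, fun i => ?_⟩
  exact bchild_letter_lt x h c i i.2 _

lemma bchild_inj (x : BVertex b r) (h : (x.1 : ℕ) < r) {c c'} (hcc : bchild x h c = bchild x h c') :
    c = c' := by
  have h1 := congrArg (fun z : BVertex b r =>
    if hz : (x.1 : ℕ) < (z.1 : ℕ) then ((z.2 ⟨(x.1 : ℕ), hz⟩) : ℕ) else 0) hcc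
  simp only at h1
  rw [dif_pos (show (x.1 : ℕ) < ((bchild x h c).1 : ℕ) by simp),
    dif_pos (show (x.1 : ℕ) < ((bchild x h c').1 : ℕ) by simp)] at h1
  rw [bchild_letter_last, bchild_letter_last] at h1
  exact Fin.ext h1

lemma bext_iff (x y : BVertex b r) :
    BExt x y ↔ ∃ (h : (x.1 : ℕ) < r) (c : Fin (b (x.1 : ℕ))), y = bchild x h c := by
  constructor
  · rintro ⟨h1, h2⟩
    have hxr : (x.1 : ℕ) < r := by have := y.1.isLt; omega
    have hx1 : (x.1 : ℕ) < (y.1 : ℕ) := by omega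
    refine ⟨hxr, Fin.cast (by rfl) (y.2 ⟨(x.1 : ℕ), hx1⟩), ?_⟩
    apply bvertex_ext (by simp; omega)
    intro i hx2 hy2
    rcases Nat.lt_or_ge i (x.1 : ℕ) with hi | hi
    · apply Fin.ext
      have := h2 ⟨i, hi⟩
      have hv : (y.2 ⟨i, hx2⟩ : ℕ) = (x.2 ⟨i, hi⟩ : ℕ) := by rw [this]
      rw [hv]
      have := bchild_letter_lt x hxr (Fin.cast rfl (y.2 ⟨(x.1 : ℕ), hx1⟩)) i hi hy2
      rw [this]
    · have hieq : i = (x.1 : ℕ) := by simp at hy2; omega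
      subst hieq
      apply Fin.ext
      rw [bchild_letter_last]
      rfl
  · rintro ⟨h, c, rfl⟩
    exact bext_bchild x h c

lemma bext_parent_iff (x y : BVertex b r) :
    BExt y x ↔ ∃ (h : 0 < (x.1 : ℕ)), y = bparent x h := by
  constructor
  · rintro ⟨h1, h2⟩
    have hx : 0 < (x.1 : ℕ) := by omega
    refine ⟨hx, ?_⟩
    apply bvertex_ext (by simp; omega)
    intro i hy2 hp2
    have hix : i < (x.1 : ℕ) := by simp at hp2; omega
    rw [bparent_letter x hx i hix hp2]
    have := h2 ⟨i, by omega⟩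
    exact this.symm
  · rintro ⟨h, rfl⟩
    refine ⟨by simp; omega, fun i => rfl⟩

/-- Sum of the values of `v` over the children of `x`. -/
noncomputable def childSum (v : BVertex b r → ℝ) (x : BVertex b r) : ℝ :=
  if h : (x.1 : ℕ) < r then ∑ c : Fin (b (x.1 : ℕ)), v (bchild x h c) else 0

/-- Value of `v` at the parent of `x` (or `0` at the root). -/
noncomputable def parentVal (v : BVertex b r → ℝ) (x : BVertex b r) : ℝ :=
  if h : 0 < (x.1 : ℕ) then v (bparent x h) else 0

lemma mulVec_apply (v : BVertex b r → ℝ) (x : BVertex b r) :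
    (BAdjMatrix b r).mulVec v x = childSum v x + parentVal v x := by
  classical
  have hsplit : ∀ y : BVertex b r, (BAdjMatrix b r) x y * v y =
      (if BExt x y then v y else 0) + (if BExt y x then v y else 0) := by
    intro y
    simp only [BAdjMatrix, BAdj]
    by_cases h1 : BExt x y
    · have h2 : ¬ BExt y x := by
        rintro ⟨hy, -⟩
        obtain ⟨hx, -⟩ := h1
        omega
      simp [h1, h2]
    · by_cases h2 : BExt y x <;> simp [h1, h2]
  simp only [Matrix.mulVec, dotProduct]
  simp only [hsplit]
  rw [Finset.sum_add_distrib]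
  congr 1
  · by_cases h : (x.1 : ℕ) < r
    · rw [childSum, dif_pos h]
      rw [← Finset.sum_filter]
      rw [show Finset.univ.filter (fun y => BExt x y) = Finset.image (bchild x h) Finset.univ by
        ext y
        simp only [Finset.mem_filter, Finset.mem_univ, true_and, Finset.mem_image]
        rw [bext_iff]
        constructor
        · rintro ⟨h', c, rfl⟩; exact ⟨c, rfl⟩
        · rintro ⟨c, rfl⟩; exact ⟨h, c, rfl⟩]
      rw [Finset.sum_image (fun c _ c' _ hcc => bchild_inj x h hcc)]
    · rw [childSum, dif_neg h]
      rw [Finset.sum_eq_zero]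
      intro y _
      rw [if_neg]
      rintro ⟨hy, -⟩
      have := y.1.isLt
      omega
  · by_cases h : 0 < (x.1 : ℕ)
    · rw [parentVal, dif_pos h]
      have : ∀ y : BVertex b r, (if BExt y x then v y else 0) = if y = bparent x h then v y else 0 := by
        intro y
        congr 1
        rw [bext_parent_iff]
        simp only [eq_iff_iff]
        exact ⟨fun ⟨_, hy⟩ => hy, fun hy => ⟨h, hy⟩⟩
      simp only [this]
      rw [Finset.sum_ite_eq' Finset.univ (bparent x h) v]
      simp
    · rw [parentVal, dif_neg h]
      rw [Finset.sum_eq_zero]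
      intro y _
      rw [if_neg]
      rintro ⟨hy, -⟩
      omega

end Tree2
section Poly

lemma Pab_eval_rec (a c : ℕ) (lam : ℝ) (i : ℕ) :
    (Pab a c (i + 2)).eval lam
      = lam * (Pab a c (i + 1)).eval lam - ((altB a c i : ℕ) : ℝ) * (Pab a c i).eval lam := by
  induction i using Nat.twoStepInduction with
  | zero => simp [Pab, altB]
  | one => simp [Pab, altB]; ring
  | more i h1 h2 =>
    rw [show Pab a c (i + 2 + 2) = (X ^ 2 - C ((a : ℝ) + (c : ℝ))) * Pab a c (i + 2)
      - C ((a : ℝ) * (c : ℝ)) * Pab a c i from rfl]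
    simp only [eval_mul, eval_sub, eval_pow, eval_X, eval_C] at *
    simp only [show i + 1 + 2 = i + 2 + 1 from rfl, show i + 1 + 1 = i + 2 from rfl] at h2
    rcases Nat.even_or_odd i with he | ho
    · have hie : i % 2 = 0 := Nat.even_iff.mp he
      have e0 : altB a c i = a := by
        simp only [altB]; rw [if_pos (by rw [Nat.even_iff]; omega)]
      have e1 : altB a c (i + 1) = c := by
        simp only [altB]; rw [if_neg (by rw [Nat.even_iff]; omega)]
      have e2 : altB a c (i + 2) = a := by
        simp only [altB]; rw [if_pos (by rw [Nat.even_iff]; omega)]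
      rw [e0] at h1; rw [e1] at h2; rw [e2]
      linear_combination (-lam) * h2 - (c : ℝ) * h1
    · have hio : i % 2 = 1 := Nat.odd_iff.mp ho
      have e0 : altB a c i = c := by
        simp only [altB]; rw [if_neg (by rw [Nat.even_iff]; omega)]
      have e1 : altB a c (i + 1) = a := by
        simp only [altB]; rw [if_pos (by rw [Nat.even_iff]; omega)]
      have e2 : altB a c (i + 2) = c := by
        simp only [altB]; rw [if_neg (by rw [Nat.even_iff]; omega)]
      rw [e0] at h1; rw [e1] at h2; rw [e2]
      linear_combination (-lam) * h2 - (a : ℝ) * h1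

lemma altB_congr (a c : ℕ) {i j : ℕ} (h : i % 2 = j % 2) : altB a c i = altB a c j := by
  simp only [altB, Nat.even_iff, h]

@[simp] lemma Pab_eval_zero (a c : ℕ) (lam : ℝ) : (Pab a c 0).eval lam = 0 := by simp [Pab]
@[simp] lemma Pab_eval_one (a c : ℕ) (lam : ℝ) : (Pab a c 1).eval lam = 1 := by simp [Pab]

lemma Qab_eval (a c m : ℕ) (lam : ℝ) :
    (Qab a c (m + 1)).eval lam = lam * (Pab a c (m + 1)).eval lam - (a : ℝ) * (Pab a c m).eval lam := by
  simp [Qab]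

end Poly
section Forward

lemma forward_dir (α β n : ℕ) (lam : ℝ)
    (hP : ∀ m, 2 ≤ m → m ≤ 2 * n + 1 → (Pab α β m).eval lam ≠ 0)
    (hQ : (Qab α β (2 * n + 1)).eval lam ≠ 0) :
    ¬ IsAdjEigenvalue (altB α β) (2 * n) lam := by
  rintro ⟨v, hv0, hv⟩
  have heig : ∀ x, lam * v x = childSum v x + parentVal v x := by
    intro x
    have h := congrFun hv x
    rw [mulVec_apply] at h
    simpa using h.symm
  have keyH : ∀ (k : ℕ) (x : BVertex (altB α β) (2 * n)), 2 * n - (x.1 : ℕ) = k →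
      (Pab α β (k + 1)).eval lam * childSum v x
        = ((altB α β (x.1 : ℕ) : ℕ) : ℝ) * (Pab α β k).eval lam * v x := by
    intro k
    induction k with
    | zero =>
      intro x hx
      have hx2n : ¬ ((x.1 : ℕ) < 2 * n) := by omega
      rw [childSum, dif_neg hx2n]
      simp [Pab]
    | succ k ih =>
      intro x hx
      have hlt : (x.1 : ℕ) < 2 * n := by omega
      rw [childSum, dif_pos hlt, Finset.mul_sum]
      have hchild : ∀ c, (Pab α β (k + 1 + 1)).eval lam * v (bchild x hlt c)
          = (Pab α β (k + 1)).eval lam * v x := by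
        intro c
        have heigw := heig (bchild x hlt c)
        have hwpos : 0 < ((bchild x hlt c).1 : ℕ) := by simp
        rw [parentVal, dif_pos hwpos, bparent_bchild] at heigw
        have hIH := ih (bchild x hlt c) (by simp; omega)
        have hrec := Pab_eval_rec α β lam k
        have ha : (altB α β (((bchild x hlt c).1 : ℕ)) : ℕ) = altB α β k := by
          apply altB_congr
          simp
          omega
        rw [ha] at hIH
        rw [show k + 1 + 1 = k + 2 from rfl, hrec]
        linear_combination (Pab α β (k + 1)).eval lam * heigw + hIH
      simp only [hchild]
      rw [Finset.sum_const, Finset.card_univ, Fintype.card_fin, nsmul_eq_mul]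
      ring
  have hzero : ∀ (d : ℕ) (x : BVertex (altB α β) (2 * n)), (x.1 : ℕ) = d → v x = 0 := by
    intro d
    induction d with
    | zero =>
      intro x hx
      have h0 : ¬ (0 < (x.1 : ℕ)) := by omega
      have he := heig x
      rw [parentVal, dif_neg h0, add_zero] at he
      have hk := keyH (2 * n) x (by omega)
      have ha : (altB α β ((x.1 : ℕ)) : ℕ) = α := by rw [hx]; simp [altB]
      rw [ha] at hk
      have hQ2 : (Qab α β (2 * n + 1)).eval lam * v x = 0 := by
        rw [Qab_eval]
        linear_combination (Pab α β (2 * n + 1)).eval lam * he + hk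
      rcases mul_eq_zero.mp hQ2 with h | h
      · exact absurd h hQ
      · exact h
    | succ d ihd =>
      intro x hx
      have hpos : 0 < (x.1 : ℕ) := by omega
      have hdle : (x.1 : ℕ) ≤ 2 * n := by have := x.1.isLt; omega
      have hy : v (bparent x hpos) = 0 := ihd _ (by simp [hx])
      have he := heig x
      rw [parentVal, dif_pos hpos, hy, add_zero] at he
      have hKH := keyH (2 * n - (d + 1)) x (by omega)
      have hrec := Pab_eval_rec α β lam (2 * n - (d + 1))
      have ha : (altB α β ((x.1 : ℕ)) : ℕ) = altB α β (2 * n - (d + 1)) := by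
        apply altB_congr
        omega
      rw [ha] at hKH
      have hz : (Pab α β (2 * n - (d + 1) + 2)).eval lam * v x = 0 := by
        rw [hrec]
        linear_combination (Pab α β (2 * n - (d + 1) + 1)).eval lam * he + hKH
      rcases mul_eq_zero.mp hz with h | h
      · exact absurd h (hP _ (by omega) (by omega))
      · exact h
  apply hv0
  funext x
  exact hzero (x.1 : ℕ) x rfl

end Forward
section Back

variable {b : ℕ → ℕ} {r : ℕ}

/-- The `i`-th letter of a vertex, as a natural number (`0` beyond its depth). -/
def lead (x : BVertex b r) (i : ℕ) : ℕ :=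
  if h : i < (x.1 : ℕ) then ((x.2 ⟨i, h⟩ : ℕ)) else 0

lemma lead_bchild (x : BVertex b r) (h : (x.1 : ℕ) < r) (c) (i : ℕ) :
    lead (bchild x h c) i = if i = (x.1 : ℕ) then (c : ℕ) else lead x i := by
  rcases lt_trichotomy i (x.1 : ℕ) with hi | hi | hi
  · rw [if_neg (by omega)]
    unfold lead
    rw [dif_pos (show i < ((bchild x h c).1 : ℕ) by simp only [bchild_depth]; omega),
      dif_pos hi, bchild_letter_lt x h c i hi]
  · subst hi
    rw [if_pos rfl]
    unfold lead
    rw [dif_pos (show (x.1 : ℕ) < ((bchild x h c).1 : ℕ) by simp only [bchild_depth]; omega)]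
    exact bchild_letter_last x h c _
  · rw [if_neg (by omega)]
    unfold lead
    rw [dif_neg (show ¬ (i < ((bchild x h c).1 : ℕ)) by simp only [bchild_depth]; omega),
      dif_neg (by omega)]

lemma lead_bparent (x : BVertex b r) (h : 0 < (x.1 : ℕ)) (i : ℕ) (hi : i < (x.1 : ℕ) - 1) :
    lead (bparent x h) i = lead x i := by
  unfold lead
  rw [dif_pos (show i < ((bparent x h).1 : ℕ) by simp only [bparent_depth]; omega),
    dif_pos (show i < (x.1 : ℕ) by omega)]
  rw [bparent_letter x h i (by omega)]

open Classical in
/-- Sign pattern of the eigenvector attached to depth `d`. -/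
noncomputable def sgn (d : ℕ) (x : BVertex b r) : ℝ :=
  if (∀ i, i + 1 < d → lead x i = 0) ∧ d ≤ (x.1 : ℕ) then
    (if d = 0 then 1 else if lead x (d - 1) = 0 then 1
      else if lead x (d - 1) = 1 then -1 else 0)
  else 0

lemma sgn_zero_of_lt (d : ℕ) (x : BVertex b r) (h : (x.1 : ℕ) < d) : sgn d x = 0 := by
  unfold sgn
  rw [if_neg]
  rintro ⟨-, h2⟩
  omega

lemma sgn_d0 (x : BVertex b r) : sgn 0 x = 1 := by
  unfold sgn
  rw [if_pos ⟨fun i hi => absurd hi (by omega), Nat.zero_le _⟩, if_pos rfl]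

lemma sgn_bchild (d : ℕ) (x : BVertex b r) (h : (x.1 : ℕ) < r) (hdx : d ≤ (x.1 : ℕ)) (c) :
    sgn d (bchild x h c) = sgn d x := by
  have hlead : ∀ i, i < (x.1 : ℕ) → lead (bchild x h c) i = lead x i := by
    intro i hi
    rw [lead_bchild, if_neg (by omega)]
  rcases eq_or_ne d 0 with rfl | hd0
  · rw [sgn_d0, sgn_d0]
  · unfold sgn
    by_cases hC : ∀ i, i + 1 < d → lead x i = 0
    · have c1 : (∀ i, i + 1 < d → lead (bchild x h c) i = 0) ∧ d ≤ ((bchild x h c).1 : ℕ) :=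
        ⟨fun i hi => by rw [hlead i (by omega)]; exact hC i hi,
          by simp only [bchild_depth]; omega⟩
      have c2 : (∀ i, i + 1 < d → lead x i = 0) ∧ d ≤ (x.1 : ℕ) := ⟨hC, hdx⟩
      rw [if_pos c1, if_pos c2, if_neg hd0, if_neg hd0, hlead (d - 1) (by omega)]
    · rw [if_neg (fun hh => hC (fun i hi => by rw [← hlead i (by omega)]; exact hh.1 i hi)),
        if_neg (fun hh => hC hh.1)]

lemma sgn_bparent (d : ℕ) (x : BVertex b r) (h : 0 < (x.1 : ℕ)) (hdx : d + 1 ≤ (x.1 : ℕ)) :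
    sgn d (bparent x h) = sgn d x := by
  have hlead : ∀ i, i < (x.1 : ℕ) - 1 → lead (bparent x h) i = lead x i :=
    fun i hi => lead_bparent x h i hi
  rcases eq_or_ne d 0 with rfl | hd0
  · rw [sgn_d0, sgn_d0]
  · unfold sgn
    by_cases hC : ∀ i, i + 1 < d → lead x i = 0
    · have c1 : (∀ i, i + 1 < d → lead (bparent x h) i = 0) ∧ d ≤ ((bparent x h).1 : ℕ) :=
        ⟨fun i hi => by rw [hlead i (by omega)]; exact hC i hi,
          by simp only [bparent_depth]; omega⟩
      have c2 : (∀ i, i + 1 < d → lead x i = 0) ∧ d ≤ (x.1 : ℕ) := ⟨hC, by omega⟩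
      rw [if_pos c1, if_pos c2, if_neg hd0, if_neg hd0, hlead (d - 1) (by omega)]
    · rw [if_neg (fun hh => hC (fun i hi => by rw [← hlead i (by omega)]; exact hh.1 i hi)),
        if_neg (fun hh => hC hh.1)]

lemma sum_sign (m : ℕ) (hm : 2 ≤ m) :
    ∑ c : Fin m, (if (c : ℕ) = 0 then (1 : ℝ) else if (c : ℕ) = 1 then -1 else 0) = 0 := by
  classical
  have hpt : ∀ c : Fin m, (if (c : ℕ) = 0 then (1 : ℝ) else if (c : ℕ) = 1 then -1 else 0)
      = (if c = (⟨0, by omega⟩ : Fin m) then (1 : ℝ) else 0)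
        + (if c = (⟨1, by omega⟩ : Fin m) then (-1 : ℝ) else 0) := by
    intro c
    have h0 : ((c : ℕ) = 0) ↔ (c = (⟨0, by omega⟩ : Fin m)) := by rw [Fin.ext_iff]
    have h1 : ((c : ℕ) = 1) ↔ (c = (⟨1, by omega⟩ : Fin m)) := by rw [Fin.ext_iff]
    by_cases hc0 : (c : ℕ) = 0
    · rw [if_pos hc0, if_pos (h0.mp hc0), if_neg (fun hh => by have := h1.mpr hh; omega)]
      ring
    · by_cases hc1 : (c : ℕ) = 1
      · rw [if_neg hc0, if_pos hc1, if_pos (h1.mp hc1),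
          if_neg (fun hh => by have := h0.mpr hh; omega)]
        ring
      · rw [if_neg hc0, if_neg hc1, if_neg (fun hh => hc0 (h0.mpr hh)),
          if_neg (fun hh => hc1 (h1.mpr hh))]
        ring
  rw [Finset.sum_congr rfl (fun c _ => hpt c), Finset.sum_add_distrib,
    Finset.sum_ite_eq' Finset.univ, Finset.sum_ite_eq' Finset.univ]
  simp

lemma sum_sgn_children (d : ℕ) (x : BVertex b r) (h : (x.1 : ℕ) < r)
    (hdd : (x.1 : ℕ) + 1 = d) (hb2 : 2 ≤ b (x.1 : ℕ)) :
    ∑ c : Fin (b (x.1 : ℕ)), sgn d (bchild x h c) = 0 := by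
  have hd0 : d ≠ 0 := by omega
  by_cases hC : ∀ i, i + 1 < d → lead x i = 0
  · have hs : ∀ c : Fin (b (x.1 : ℕ)), sgn d (bchild x h c)
        = (if (c : ℕ) = 0 then (1 : ℝ) else if (c : ℕ) = 1 then -1 else 0) := by
      intro c
      unfold sgn
      have c1 : (∀ i, i + 1 < d → lead (bchild x h c) i = 0) ∧ d ≤ ((bchild x h c).1 : ℕ) :=
        ⟨fun i hi => by rw [lead_bchild, if_neg (by omega)]; exact hC i (by omega),
          by simp only [bchild_depth]; omega⟩
      rw [if_pos c1, if_neg hd0, lead_bchild, if_pos (show d - 1 = (x.1 : ℕ) by omega)]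
    rw [Finset.sum_congr rfl (fun c _ => hs c)]
    exact sum_sign _ hb2
  · have hs : ∀ c : Fin (b (x.1 : ℕ)), sgn d (bchild x h c) = 0 := by
      intro c
      unfold sgn
      rw [if_neg]
      rintro ⟨H, -⟩
      exact hC (fun i hi => by
        have := H i hi
        rwa [lead_bchild, if_neg (by omega)] at this)
    rw [Finset.sum_congr rfl (fun c _ => hs c), Finset.sum_const, smul_zero]

/-- The all-`0` leaf. -/
def leaf0 (b : ℕ → ℕ) (r : ℕ) (hb : ∀ i, 0 < b i) : BVertex b r :=
  ⟨⟨r, Nat.lt_succ_self r⟩, fun _ => ⟨0, hb _⟩⟩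

@[simp] lemma leaf0_depth (hb : ∀ i, 0 < b i) : ((leaf0 b r hb).1 : ℕ) = r := rfl

lemma lead_leaf0 (hb : ∀ i, 0 < b i) (i : ℕ) : lead (leaf0 b r hb) i = 0 := by
  unfold lead leaf0
  split <;> rfl

lemma sgn_leaf0 (d : ℕ) (hb : ∀ i, 0 < b i) (hd : d ≤ r) : sgn d (leaf0 b r hb) = 1 := by
  unfold sgn
  rw [if_pos ⟨fun i _ => lead_leaf0 hb i, by simpa using hd⟩]
  rcases eq_or_ne d 0 with rfl | hd0
  · rw [if_pos rfl]
  · rw [if_neg hd0, lead_leaf0, if_pos rfl]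

end Back
section Backward

lemma backward_dir (α β n d : ℕ) (lam : ℝ) (hα : 2 ≤ α) (hβ : 2 ≤ β) (hn : 1 ≤ n)
    (hd : d ≤ 2 * n)
    (hcond : (d = 0 ∧ lam * (Pab α β (2 * n + 1)).eval lam
                - (α : ℝ) * (Pab α β (2 * n)).eval lam = 0)
      ∨ (1 ≤ d ∧ (Pab α β (2 * n - d + 2)).eval lam = 0)) :
    IsAdjEigenvalue (altB α β) (2 * n) lam := by
  classical
  have hbpos : ∀ i, 0 < altB α β i := by intro i; unfold altB; split <;> omega
  have hbge2 : ∀ i, 2 ≤ altB α β i := by intro i; unfold altB; split <;> omega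
  set v : BVertex (altB α β) (2 * n) → ℝ :=
    fun x => sgn d x * (Pab α β (2 * n - (x.1 : ℕ) + 1)).eval lam with hvdef
  refine ⟨v, ?_, ?_⟩
  · intro hfun
    have h1 : v (leaf0 (altB α β) (2 * n) hbpos) = 0 := by rw [hfun]; rfl
    rw [hvdef] at h1
    simp only [leaf0_depth] at h1
    rw [sgn_leaf0 d hbpos hd, show 2 * n - 2 * n + 1 = 1 from by omega, Pab_eval_one] at h1
    norm_num at h1
  · funext x
    rw [mulVec_apply]
    simp only [Pi.smul_apply, smul_eq_mul]
    have hxle : (x.1 : ℕ) ≤ 2 * n := by have := x.1.isLt; omega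
    rcases Nat.lt_or_ge (x.1 : ℕ) d with hed | hed
    · -- depth < d : outside the support
      have hxr : (x.1 : ℕ) < 2 * n := by omega
      have hchild0 : childSum v x = 0 := by
        rw [childSum, dif_pos hxr]
        rcases Nat.lt_or_ge ((x.1 : ℕ) + 1) d with h2 | h2
        · apply Finset.sum_eq_zero
          intro c _
          simp only [hvdef]
          rw [sgn_zero_of_lt d (bchild x hxr c) (by simp only [bchild_depth]; omega), zero_mul]
        · have hdd : (x.1 : ℕ) + 1 = d := by omega
          simp only [hvdef, bchild_depth]
          rw [← Finset.sum_mul, sum_sgn_children d x hxr hdd (hbge2 _), zero_mul]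
      have hpar0 : parentVal v x = 0 := by
        rw [parentVal]
        split
        · next hh =>
            simp only [hvdef]
            rw [sgn_zero_of_lt d (bparent x hh) (by simp only [bparent_depth]; omega), zero_mul]
        · rfl
      rw [hchild0, hpar0]
      simp only [hvdef]
      rw [sgn_zero_of_lt d x hed]
      ring
    · by_cases hxr : (x.1 : ℕ) < 2 * n
      · have hcs : childSum v x = ((altB α β ((x.1 : ℕ)) : ℕ) : ℝ)
            * (sgn d x * (Pab α β (2 * n - (x.1 : ℕ))).eval lam) := by
          rw [childSum, dif_pos hxr]
          simp only [hvdef, bchild_depth, sgn_bchild d x hxr hed,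
            show 2 * n - ((x.1 : ℕ) + 1) + 1 = 2 * n - (x.1 : ℕ) from by omega]
          rw [Finset.sum_const, Finset.card_univ, Fintype.card_fin, nsmul_eq_mul]
        by_cases hx0 : (x.1 : ℕ) = 0
        · -- root, necessarily d = 0
          have hd0 : d = 0 := by omega
          have hQ0 : lam * (Pab α β (2 * n + 1)).eval lam
              - (α : ℝ) * (Pab α β (2 * n)).eval lam = 0 := by
            rcases hcond with ⟨-, h⟩ | ⟨h1, -⟩
            · exact h
            · omega
          have hpar0 : parentVal v x = 0 := by rw [parentVal, dif_neg (by omega)]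
          rw [hcs, hpar0]
          simp only [hvdef]
          have hA : altB α β ((x.1 : ℕ)) = α := by rw [hx0]; simp [altB]
          rw [hA, hd0]
          simp only [sgn_d0]
          rw [show 2 * n - (x.1 : ℕ) = 2 * n from by omega]
          linear_combination -hQ0
        · have hpos : 0 < (x.1 : ℕ) := by omega
          have hpv : parentVal v x
              = sgn d (bparent x hpos) * (Pab α β (2 * n - (x.1 : ℕ) + 2)).eval lam := by
            rw [parentVal, dif_pos hpos]
            simp only [hvdef, bparent_depth]
            rw [show 2 * n - ((x.1 : ℕ) - 1) + 1 = 2 * n - (x.1 : ℕ) + 2 from by omega]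
          have hrec := Pab_eval_rec α β lam (2 * n - (x.1 : ℕ))
          rw [altB_congr α β (show (2 * n - (x.1 : ℕ)) % 2 = (x.1 : ℕ) % 2 from by omega)] at hrec
          rw [show 2 * n - (x.1 : ℕ) + 1 + 1 = 2 * n - (x.1 : ℕ) + 2 from rfl,
            show 2 * n - (x.1 : ℕ) + 1 = 2 * n - (x.1 : ℕ) + 1 from rfl] at hrec
          rcases hed.eq_or_lt with hde | hde
          · -- d = depth ≥ 1 : top of the support
            have hP0 : (Pab α β (2 * n - d + 2)).eval lam = 0 := by
              rcases hcond with ⟨h00, -⟩ | ⟨-, h⟩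
              · omega
              · exact h
            rw [show 2 * n - d + 2 = 2 * n - (x.1 : ℕ) + 2 from by omega] at hP0
            have hsp : sgn d (bparent x hpos) = 0 :=
              sgn_zero_of_lt d (bparent x hpos) (by simp only [bparent_depth]; omega)
            rw [hcs, hpv, hsp, zero_mul, add_zero]
            simp only [hvdef]
            linear_combination sgn d x * hrec - sgn d x * hP0
          · -- strictly inside the support
            have hsp : sgn d (bparent x hpos) = sgn d x := sgn_bparent d x hpos (by omega)
            rw [hcs, hpv, hsp]
            simp only [hvdef]
            linear_combination sgn d x * hrec
      · -- leaves
        have hxeq : (x.1 : ℕ) = 2 * n := by omega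
        have hpos : 0 < (x.1 : ℕ) := by omega
        have hchild0 : childSum v x = 0 := by rw [childSum, dif_neg hxr]
        have hpv : parentVal v x = sgn d (bparent x hpos) * (Pab α β 2).eval lam := by
          rw [parentVal, dif_pos hpos]
          simp only [hvdef, bparent_depth]
          rw [show 2 * n - ((x.1 : ℕ) - 1) + 1 = 2 from by omega]
        have hp2 : (Pab α β 2).eval lam = lam := by simp [Pab]
        have hp1 : (Pab α β (2 * n - (x.1 : ℕ) + 1)).eval lam = 1 := by
          rw [show 2 * n - (x.1 : ℕ) + 1 = 1 from by omega, Pab_eval_one]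
        rcases hed.eq_or_lt with hde | hde
        · -- d = 2n, so lam = 0
          have hP0 : (Pab α β (2 * n - d + 2)).eval lam = 0 := by
            rcases hcond with ⟨h00, -⟩ | ⟨-, h⟩
            · omega
            · exact h
          rw [show 2 * n - d + 2 = 2 from by omega, hp2] at hP0
          rw [hchild0, hpv, hp2, hP0]
          ring
        · have hsp : sgn d (bparent x hpos) = sgn d x := sgn_bparent d x hpos (by omega)
          rw [hchild0, hpv, hsp, hp2]
          simp only [hvdef]
          rw [hp1]
          ring

end Backward
/-- For integers `α, β ≥ 2` and `n ≥ 1`, a real number `lam` is an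
eigenvalue of the adjacency matrix of the alternating tree `X^{(α,β)}_{2n}` iff
`lam` is a root of `P^{(α,β)}_m` for some `2 ≤ m ≤ 2n + 1`, or a root of
`Q^{(α,β)}_{2n+1}`. -/
theorem alt_adj_spectrum (α β n : ℕ) (hα : 2 ≤ α) (hβ : 2 ≤ β) (hn : 1 ≤ n) (lam : ℝ) :
    IsAdjEigenvalue (altB α β) (2 * n) lam ↔
      (∃ m : ℕ, 2 ≤ m ∧ m ≤ 2 * n + 1 ∧ (Pab α β m).IsRoot lam) ∨
        (Qab α β (2 * n + 1)).IsRoot lam := by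
  constructor
  · intro h
    by_contra hcon
    push_neg at hcon
    exact forward_dir α β n lam (fun m h2 hle hev => hcon.1 m h2 hle hev) hcon.2 h
  · rintro (⟨m, h2, hle, hroot⟩ | hQ)
    · exact backward_dir α β n (2 * n + 2 - m) lam hα hβ hn (by omega)
        (Or.inr ⟨by omega,
          by rw [show 2 * n - (2 * n + 2 - m) + 2 = m from by omega]; exact hroot⟩)
    · exact backward_dir α β n 0 lam hα hβ hn (by omega)
        (Or.inl ⟨rfl, by rw [← Qab_eval α β (2 * n) lam]; exact hQ⟩)
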